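/- Let Q^tr ⊆ ℝ be the field of all totally real algebraic numbers, let L = Q^tr(i) ⊆ ℂ with i = √(−1), and let O_L be the ring of integers of L. Then Z^tr is existentially definable in O_L: there exist a natural number n and a quantifier-free formula θ(x, y₁, …, y_n) in the first-order language of rings (with no parameters) such that for every x ∈ O_L, x ∈ Z^tr if and only if there exist y₁, …, y_n ∈ O_L for which θ(x, y₁, …, y_n) holds in the ring O_L. -/

import Mathlib

open Complex

noncomputable section

/-- The ring of integers of a subfield `L ⊆ ℂ`: the elements of `L` that are integral
over `ℤ`, viewed as a subring of `ℂ`. -/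
def ringOfInt (L : Subfield ℂ) : Subring ℂ where
  carrier := {x : ℂ | x ∈ L ∧ IsIntegral ℤ x}
  zero_mem' := ⟨L.zero_mem, isIntegral_zero⟩
  one_mem' := ⟨L.one_mem, isIntegral_one⟩
  add_mem' := fun hx hy => ⟨L.add_mem hx.1 hy.1, hx.2.add hy.2⟩
  mul_mem' := fun hx hy => ⟨L.mul_mem hx.1 hy.1, hx.2.mul hy.2⟩
  neg_mem' := fun hx => ⟨L.neg_mem hx.1, hx.2.neg⟩

lemma ringOfInt_mem_subfield {L : Subfield ℂ} {x : ℂ} (hx : x ∈ ringOfInt L) : x ∈ L := hx.1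

/-- The underlying set of the ring `R_{m,L} = {x ∈ O_L : ∃ a ∈ O_L, ∃ j, 0 ≤ j < m, x = j + m·a}`. -/
def Rset (m : ℕ) (L : Subfield ℂ) : Set ℂ :=
  {x : ℂ | x ∈ ringOfInt L ∧
    ∃ a ∈ ringOfInt L, ∃ j : ℤ, 0 ≤ j ∧ j < (m : ℤ) ∧ x = (j : ℂ) + (m : ℂ) * a}

lemma Rset_norm {m : ℕ} (hm : m ≠ 0) {L : Subfield ℂ} {x : ℂ} (hx : x ∈ ringOfInt L)
    {a : ℂ} (ha : a ∈ ringOfInt L) {j : ℤ} (h : x = (j : ℂ) + (m : ℂ) * a) :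
    x ∈ Rset m L := by
  have hm' : (0 : ℤ) < m := by exact_mod_cast Nat.pos_of_ne_zero hm
  refine ⟨hx, a + ((j / (m : ℤ) : ℤ) : ℂ), ?_, j % m,
    Int.emod_nonneg j (by exact_mod_cast hm), Int.emod_lt_of_pos j hm', ?_⟩
  · exact (ringOfInt L).add_mem ha (intCast_mem (ringOfInt L) _)
  · have key : ((m : ℤ) * (j / (m : ℤ)) + j % (m : ℤ) : ℤ) = j := Int.mul_ediv_add_emod j m
    have key' := congrArg (Int.cast : ℤ → ℂ) key
    push_cast at key'
    rw [h]
    linear_combination -key'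

/-- The ring `R_{m,L}`, as a subring of `ℂ`. -/
def Rring (m : ℕ) (hm : m ≠ 0) (L : Subfield ℂ) : Subring ℂ where
  carrier := Rset m L
  zero_mem' := Rset_norm hm (ringOfInt L).zero_mem (ringOfInt L).zero_mem (j := 0) (by simp)
  one_mem' := Rset_norm hm (ringOfInt L).one_mem (ringOfInt L).zero_mem (j := 1) (by simp)
  add_mem' := by
    rintro x y ⟨hx, a, ha, j, _, _, rfl⟩ ⟨hy, b, hb, k, _, _, rfl⟩
    exact Rset_norm hm ((ringOfInt L).add_mem hx hy) ((ringOfInt L).add_mem ha hb)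
      (j := j + k) (by push_cast; ring)
  mul_mem' := by
    rintro x y ⟨hx, a, ha, j, _, _, rfl⟩ ⟨hy, b, hb, k, _, _, rfl⟩
    refine Rset_norm hm ((ringOfInt L).mul_mem hx hy)
      (a := (j : ℂ) * b + (k : ℂ) * a + (m : ℂ) * (a * b)) ?_ (j := j * k) (by push_cast; ring)
    exact (ringOfInt L).add_mem
      ((ringOfInt L).add_mem ((ringOfInt L).mul_mem (intCast_mem _ j) hb)
        ((ringOfInt L).mul_mem (intCast_mem _ k) ha))
      ((ringOfInt L).mul_mem (natCast_mem _ m) ((ringOfInt L).mul_mem ha hb))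
  neg_mem' := by
    rintro x ⟨hx, a, ha, j, _, _, rfl⟩
    exact Rset_norm hm ((ringOfInt L).neg_mem hx) ((ringOfInt L).neg_mem ha)
      (j := -j) (by push_cast; ring)

lemma twoNZ : (2 : ℕ) ≠ 0 := by norm_num

/-- A subfield of `ℂ` is totally real if every embedding into `ℂ` has real image. -/
def IsTotallyRealSubfield (K : Subfield ℂ) : Prop :=
  ∀ (σ : K →+* ℂ) (x : K), (σ x).im = 0

/-- A subfield of `ℂ` is totally imaginary if no embedding into `ℂ` has real image. -/
def IsTotallyImaginarySubfield (L : Subfield ℂ) : Prop :=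
  ∀ σ : L →+* ℂ, ∃ x : L, (σ x).im ≠ 0

/-- `L` is a totally imaginary quadratic extension of the totally real field `K`:
`K ⊆ L ⊆ ℂ` are algebraic over `ℚ`, `L` is closed under complex conjugation,
`[L : K] = 2`, `K` is totally real and `L` is totally imaginary. -/
structure IsTIQExt (K L : Subfield ℂ) : Prop where
  le : K ≤ L
  alg : ∀ x : L, IsAlgebraic ℚ (x : ℂ)
  conj_closed : ∀ x ∈ L, (starRingEnd ℂ) x ∈ L
  tot_real : IsTotallyRealSubfield K
  tot_imaginary : IsTotallyImaginarySubfield L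
  deg : letI := (Subfield.inclusion le).toAlgebra; Module.finrank K L = 2

/-- An algebraic number `α ∈ ℂ` is totally real if all complex roots of its minimal
polynomial over `ℚ` are real. -/
def TotallyRealNum (α : ℂ) : Prop :=
  IsAlgebraic ℚ α ∧ ∀ z : ℂ, Polynomial.aeval z (minpoly ℚ α) = 0 → z.im = 0

/-- The set `X₀ = {u₁² + u₂² − u₃² − u₄² : uᵢ ∈ R_{2,L}ˣ}`. -/
def X0 (L : Subfield ℂ) : Set ℂ :=
  {x : ℂ | ∃ u₁ u₂ u₃ u₄ : (Rring 2 twoNZ L)ˣ,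
    x = ((u₁ : Rring 2 twoNZ L) : ℂ) ^ 2 + ((u₂ : Rring 2 twoNZ L) : ℂ) ^ 2
      - ((u₃ : Rring 2 twoNZ L) : ℂ) ^ 2 - ((u₄ : Rring 2 twoNZ L) : ℂ) ^ 2}

/-- The set `X₁ = {d ∈ O_L : 32·d ∈ X₀}`. -/
def X1 (L : Subfield ℂ) : Set ℂ :=
  {d : ℂ | d ∈ ringOfInt L ∧ 32 * d ∈ X0 L}

/-- The set `X = {α ∈ O_L : ∃ x₁, x₂ ∈ X₁, 4·α = x₁ − x₂}`. -/
def XX (L : Subfield ℂ) : Set ℂ :=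
  {α : ℂ | α ∈ ringOfInt L ∧ ∃ x₁ ∈ X1 L, ∃ x₂ ∈ X1 L, 4 * α = x₁ - x₂}

/-- The set of all totally real algebraic numbers (the field `ℚ^tr`). -/
def QtrSet : Set ℂ := {z : ℂ | TotallyRealNum z}

/-- The field `ℚ^tr(i)`, the subfield of `ℂ` generated by all totally real numbers and `i`. -/
def QtrI : Subfield ℂ := Subfield.closure (QtrSet ∪ {Complex.I})


/-! ### Auxiliary machinery for the proof -/

namespace ZtrAux

open Polynomial IntermediateField

/-- Totally nonnegative algebraic number: all conjugates are real and nonnegative. -/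
def TNN (α : ℂ) : Prop :=
  IsAlgebraic ℚ α ∧ ∀ z : ℂ, aeval z (minpoly ℚ α) = 0 → z.im = 0 ∧ 0 ≤ z.re

lemma TNN.tr {α : ℂ} (h : TNN α) : TotallyRealNum α :=
  ⟨h.1, fun z hz => (h.2 z hz).1⟩

lemma tr_isIntegralQ {α : ℂ} (h : TotallyRealNum α) : IsIntegral ℚ α :=
  h.1.isIntegral

lemma tr_im_eq_zero {α : ℂ} (h : TotallyRealNum α) : α.im = 0 :=
  h.2 α (minpoly.aeval ℚ α)

/-- Any ring hom from an intermediate field of `ℚ ⊆ ℂ` to `ℂ` sends an element to a root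
of its minimal polynomial. -/
lemma aeval_ringHom_minpoly {E : IntermediateField ℚ ℂ} (g : E →+* ℂ) {x : ℂ} (hx : x ∈ E) :
    aeval (g ⟨x, hx⟩) (minpoly ℚ x) = 0 := by
  have h2 : aeval (⟨x, hx⟩ : E) (minpoly ℚ x) = 0 := by
    have h1 := minpoly.algebraMap_eq (A := ℚ) (algebraMap E ℂ).injective (⟨x, hx⟩ : E)
    have h3 := minpoly.aeval ℚ (⟨x, hx⟩ : E)
    rw [← h1] at h3
    exact h3
  have h4 : g.comp (algebraMap ℚ E) = algebraMap ℚ ℂ := by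
    refine RingHom.ext fun q => ?_
    rw [RingHom.comp_apply, eq_ratCast (algebraMap ℚ E) q, map_ratCast,
      eq_ratCast (algebraMap ℚ ℂ) q]
  rw [aeval_def, ← h4, ← Polynomial.hom_eval₂, ← aeval_def, h2, map_zero]

/-- Extension of embedding: given algebraic `a b` and a root `z` of the minimal polynomial of
`c ∈ ℚ(a,b)`, there is a ring hom on `ℚ(a,b)` sending `c` to `z`. -/
lemma exists_conj {a b c z : ℂ} (ha : IsIntegral ℚ a) (hb : IsIntegral ℚ b)
    (hc : c ∈ IntermediateField.adjoin ℚ ({a, b} : Set ℂ))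
    (hz : aeval z (minpoly ℚ c) = 0) :
    ∃ g : (IntermediateField.adjoin ℚ ({a, b} : Set ℂ)) →+* ℂ, g ⟨c, hc⟩ = z := by
  have hK : ∀ s ∈ ({a, b} : Set ℂ), IsIntegral ℚ s ∧ ((minpoly ℚ s).map (algebraMap ℚ ℂ)).Splits := by
    intro s hs
    refine ⟨?_, IsAlgClosed.splits _⟩
    rcases hs with rfl | hs
    · exact ha
    · rw [Set.mem_singleton_iff] at hs; subst hs; exact hb
  obtain ⟨φ, hφ⟩ := IntermediateField.exists_algHom_adjoin_of_splits_of_aeval hK hc hz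
  exact ⟨φ.toRingHom, hφ⟩

lemma tr_ratCast (q : ℚ) : TotallyRealNum (q : ℂ) := by
  have hint : IsIntegral ℚ (q : ℂ) := by
    rw [← eq_ratCast (algebraMap ℚ ℂ) q]; exact isIntegral_algebraMap
  refine ⟨hint.isAlgebraic, fun z hz => ?_⟩
  have h0 : (q : ℂ) = algebraMap ℚ ℂ q := by rw [eq_ratCast]
  rw [h0, minpoly.eq_X_sub_C] at hz
  simp only [map_sub, aeval_X, aeval_C] at hz
  have : z = algebraMap ℚ ℂ q := by linear_combination hz
  rw [this, ← h0]
  simp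

lemma tr_add {a b : ℂ} (ha : TotallyRealNum a) (hb : TotallyRealNum b) :
    TotallyRealNum (a + b) := by
  refine ⟨((tr_isIntegralQ ha).add (tr_isIntegralQ hb)).isAlgebraic, fun z hz => ?_⟩
  have hamem : a ∈ IntermediateField.adjoin ℚ ({a, b} : Set ℂ) :=
    IntermediateField.subset_adjoin ℚ _ (by simp)
  have hbmem : b ∈ IntermediateField.adjoin ℚ ({a, b} : Set ℂ) :=
    IntermediateField.subset_adjoin ℚ _ (by simp)
  obtain ⟨g, hg⟩ := exists_conj (tr_isIntegralQ ha) (tr_isIntegralQ hb)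
    (add_mem hamem hbmem) hz
  have h1 : (⟨a + b, add_mem hamem hbmem⟩ :
      IntermediateField.adjoin ℚ ({a, b} : Set ℂ)) = ⟨a, hamem⟩ + ⟨b, hbmem⟩ := rfl
  rw [h1, map_add] at hg
  have hima := ha.2 _ (aeval_ringHom_minpoly g hamem)
  have himb := hb.2 _ (aeval_ringHom_minpoly g hbmem)
  rw [← hg]
  simp [Complex.add_im, hima, himb]

lemma tr_mul {a b : ℂ} (ha : TotallyRealNum a) (hb : TotallyRealNum b) :
    TotallyRealNum (a * b) := by
  refine ⟨((tr_isIntegralQ ha).mul (tr_isIntegralQ hb)).isAlgebraic, fun z hz => ?_⟩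
  have hamem : a ∈ IntermediateField.adjoin ℚ ({a, b} : Set ℂ) :=
    IntermediateField.subset_adjoin ℚ _ (by simp)
  have hbmem : b ∈ IntermediateField.adjoin ℚ ({a, b} : Set ℂ) :=
    IntermediateField.subset_adjoin ℚ _ (by simp)
  obtain ⟨g, hg⟩ := exists_conj (tr_isIntegralQ ha) (tr_isIntegralQ hb)
    (mul_mem hamem hbmem) hz
  have h1 : (⟨a * b, mul_mem hamem hbmem⟩ :
      IntermediateField.adjoin ℚ ({a, b} : Set ℂ)) = ⟨a, hamem⟩ * ⟨b, hbmem⟩ := rfl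
  rw [h1, map_mul] at hg
  have hima := ha.2 _ (aeval_ringHom_minpoly g hamem)
  have himb := hb.2 _ (aeval_ringHom_minpoly g hbmem)
  rw [← hg]
  simp [Complex.mul_im, hima, himb]

lemma tr_neg {a : ℂ} (ha : TotallyRealNum a) : TotallyRealNum (-a) := by
  have h := tr_mul (tr_ratCast (-1)) ha
  simpa using h

lemma tr_sub {a b : ℂ} (ha : TotallyRealNum a) (hb : TotallyRealNum b) :
    TotallyRealNum (a - b) := by
  have := tr_add ha (tr_neg hb)
  simpa [sub_eq_add_neg] using this

lemma tr_inv {a : ℂ} (ha : TotallyRealNum a) : TotallyRealNum a⁻¹ := by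
  refine ⟨(IsIntegral.inv (tr_isIntegralQ ha)).isAlgebraic, fun z hz => ?_⟩
  have hamem : a ∈ IntermediateField.adjoin ℚ ({a, a} : Set ℂ) :=
    IntermediateField.subset_adjoin ℚ _ (by simp)
  obtain ⟨g, hg⟩ := exists_conj (tr_isIntegralQ ha) (tr_isIntegralQ ha)
    (inv_mem hamem) hz
  have h1 : (⟨a⁻¹, inv_mem hamem⟩ :
      IntermediateField.adjoin ℚ ({a, a} : Set ℂ)) = (⟨a, hamem⟩)⁻¹ := rfl
  rw [h1, map_inv₀] at hg
  have hima := ha.2 _ (aeval_ringHom_minpoly g hamem)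
  rw [← hg]
  simp [Complex.inv_im, hima]

/-- If `z²` is a conjugate-real-nonneg value then `z` is real. -/
lemma im_eq_zero_of_sq {z : ℂ} (h1 : (z ^ 2).im = 0) (h2 : 0 ≤ (z ^ 2).re) : z.im = 0 := by
  have e1 : (z ^ 2).im = 2 * z.re * z.im := by
    rw [pow_two, Complex.mul_im]; ring
  have e2 : (z ^ 2).re = z.re ^ 2 - z.im ^ 2 := by
    rw [pow_two, Complex.mul_re]; ring
  rw [e1] at h1
  rw [e2] at h2
  rcases mul_eq_zero.1 h1 with h | h
  · rcases mul_eq_zero.1 h with h | h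
    · norm_num at h
    · nlinarith
  · exact h

/-- Square roots of totally nonnegative numbers are totally real. -/
lemma tnn_sqrt {t : ℂ} (h : TNN t) :
    ∃ s : ℂ, s ^ 2 = t ∧ TotallyRealNum s := by
  have htim : t.im = 0 := tr_im_eq_zero h.tr
  have htre : 0 ≤ t.re := (h.2 t (minpoly.aeval ℚ t)).2
  refine ⟨(Real.sqrt t.re : ℂ), ?_, ?_⟩
  · rw [← Complex.ofReal_pow, Real.sq_sqrt htre]
    exact Complex.ext rfl (by simp [htim])
  · have hsq : ((Real.sqrt t.re : ℂ)) ^ 2 = t := by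
      rw [← Complex.ofReal_pow, Real.sq_sqrt htre]
      exact Complex.ext rfl (by simp [htim])
    have hint : IsIntegral ℚ ((Real.sqrt t.re : ℂ)) := by
      refine IsIntegral.of_pow (n := 2) (by norm_num) ?_
      rw [hsq]; exact h.1.isIntegral
    refine ⟨hint.isAlgebraic, fun z hz => ?_⟩
    set s : ℂ := (Real.sqrt t.re : ℂ)
    have hdvd : minpoly ℚ s ∣ (minpoly ℚ t).comp (X ^ 2) := by
      apply minpoly.dvd
      rw [aeval_comp]
      simp only [map_pow, aeval_X]
      rw [hsq]
      exact minpoly.aeval ℚ t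
    obtain ⟨r, hr⟩ := hdvd
    have hzr : aeval z ((minpoly ℚ t).comp (X ^ 2)) = 0 := by
      rw [hr, map_mul, hz, zero_mul]
    rw [aeval_comp] at hzr
    simp only [map_pow, aeval_X] at hzr
    have := h.2 _ hzr
    exact im_eq_zero_of_sq this.1 this.2

/-- Totally nonnegative numbers are preserved by `z ↦ q z + r` for rationals `q > 0`, `r ≥ 0`. -/
lemma tnn_affine {d : ℂ} (h : TNN d) {q r : ℚ} (hq : 0 < q) (hr : 0 ≤ r) :
    TNN ((q : ℂ) * d + (r : ℂ)) := by
  have halg : IsIntegral ℚ ((q : ℂ) * d + (r : ℂ)) := by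
    refine IsIntegral.add (IsIntegral.mul ?_ h.1.isIntegral) ?_
    · exact (tr_ratCast q).1.isIntegral
    · exact (tr_ratCast r).1.isIntegral
  refine ⟨halg.isAlgebraic, fun z hz => ?_⟩
  have hq0 : (q : ℂ) ≠ 0 := by exact_mod_cast hq.ne'
  have hdvd : minpoly ℚ ((q : ℂ) * d + (r : ℂ)) ∣
      (minpoly ℚ d).comp (C q⁻¹ * (X - C r)) := by
    apply minpoly.dvd
    rw [aeval_comp]
    have : aeval ((q : ℂ) * d + (r : ℂ)) (C q⁻¹ * (X - C r)) = d := by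
      simp only [map_mul, aeval_C, map_sub, aeval_X]
      have e1 : algebraMap ℚ ℂ q⁻¹ = (q : ℂ)⁻¹ := by push_cast [eq_ratCast]; ring
      have e2 : algebraMap ℚ ℂ r = (r : ℂ) := by rw [eq_ratCast]
      rw [e1, e2]
      field_simp
      ring
    rw [this]
    exact minpoly.aeval ℚ d
  obtain ⟨p2, hp2⟩ := hdvd
  have hzr : aeval z ((minpoly ℚ d).comp (C q⁻¹ * (X - C r))) = 0 := by
    rw [hp2, map_mul, hz, zero_mul]
  rw [aeval_comp] at hzr
  simp only [map_mul, aeval_C, map_sub, aeval_X] at hzr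
  have e1 : algebraMap ℚ ℂ q⁻¹ = (q : ℂ)⁻¹ := by push_cast [eq_ratCast]; ring
  have e2 : algebraMap ℚ ℂ r = (r : ℂ) := by rw [eq_ratCast]
  rw [e1, e2] at hzr
  have hw := h.2 _ hzr
  set w : ℂ := (q : ℂ)⁻¹ * (z - (r : ℂ)) with hwdef
  have hzw : z = (q : ℂ) * w + (r : ℂ) := by
    rw [hwdef]; field_simp; ring
  constructor
  · rw [hzw]
    have : ((q : ℂ) * w).im = (q : ℝ) * w.im := by
      simp [Complex.mul_im]
    simp [Complex.add_im, this, hw.1]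
  · rw [hzw]
    have him : ((q : ℂ) * w + (r : ℂ)).re = (q : ℝ) * w.re + (r : ℝ) := by
      simp [Complex.add_re, Complex.mul_re]
    rw [him]
    have hq' : (0 : ℝ) ≤ q := by exact_mod_cast hq.le
    have hr' : (0 : ℝ) ≤ r := by exact_mod_cast hr
    nlinarith [hw.2]

lemma tnn_natCast (m : ℕ) : TNN ((m : ℂ)) := by
  have h0 : ((m : ℂ)) = ((m : ℚ) : ℂ) := by push_cast; ring
  have hint : IsIntegral ℚ ((m : ℂ)) := by
    rw [h0, ← eq_ratCast (algebraMap ℚ ℂ) (m : ℚ)]; exact isIntegral_algebraMap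
  refine ⟨hint.isAlgebraic, fun z hz => ?_⟩
  rw [h0, ← eq_ratCast (algebraMap ℚ ℂ) (m : ℚ), minpoly.eq_X_sub_C] at hz
  simp only [map_sub, aeval_X, aeval_C] at hz
  have : z = algebraMap ℚ ℂ (m : ℚ) := by linear_combination hz
  rw [this, eq_ratCast]
  constructor <;> simp

/-- Every totally real number becomes totally nonnegative after adding a suitable natural. -/
lemma exists_nat_tnn_add {x : ℂ} (h : TotallyRealNum x) : ∃ m : ℕ, TNN (x + (m : ℂ)) := by
  -- bound the roots of the minimal polynomial
  set p := (minpoly ℚ x).map (algebraMap ℚ ℂ) with hp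
  have hp0 : p ≠ 0 := by
    rw [hp, Ne, Polynomial.map_eq_zero_iff (algebraMap ℚ ℂ).injective]
    exact minpoly.ne_zero (tr_isIntegralQ h)
  have hfin : Set.Finite {w : ℂ | Polynomial.IsRoot p w} := Polynomial.finite_setOf_isRoot hp0
  have hbdd : BddAbove ((fun w : ℂ => -w.re) '' {w : ℂ | Polynomial.IsRoot p w}) :=
    (hfin.image _).bddAbove
  obtain ⟨M, hM⟩ := hbdd
  obtain ⟨m, hm⟩ := exists_nat_ge M
  refine ⟨m, ?_⟩
  have halg : IsIntegral ℚ (x + (m : ℂ)) :=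
    IsIntegral.add (tr_isIntegralQ h) (tnn_natCast m).1.isIntegral
  refine ⟨halg.isAlgebraic, fun z hz => ?_⟩
  have hdvd : minpoly ℚ (x + (m : ℂ)) ∣ (minpoly ℚ x).comp (X - C (m : ℚ)) := by
    apply minpoly.dvd
    rw [aeval_comp]
    have : aeval (x + (m : ℂ)) (X - C (m : ℚ)) = x := by
      simp only [map_sub, aeval_X, aeval_C, eq_ratCast]
      push_cast; ring
    rw [this]
    exact minpoly.aeval ℚ x
  obtain ⟨p2, hp2⟩ := hdvd
  have hzr : aeval z ((minpoly ℚ x).comp (X - C (m : ℚ))) = 0 := by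
    rw [hp2, map_mul, hz, zero_mul]
  rw [aeval_comp] at hzr
  simp only [map_sub, aeval_X, aeval_C, eq_ratCast] at hzr
  have hzm : aeval (z - (m : ℂ)) (minpoly ℚ x) = 0 := by
    have : ((m : ℚ) : ℂ) = (m : ℂ) := by push_cast; ring
    rwa [this] at hzr
  have hwim := h.2 _ hzm
  have hwroot : Polynomial.IsRoot p (z - (m : ℂ)) := by
    rw [hp, Polynomial.IsRoot, Polynomial.eval_map, ← aeval_def]
    exact hzm
  have hMle : -(z - (m : ℂ)).re ≤ M := hM (Set.mem_image_of_mem _ hwroot)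
  constructor
  · have e0 : z.im = (z - (m : ℂ)).im := by simp
    rw [e0]; exact hwim
  · have e1 : z.re = (z - (m : ℂ)).re + (m : ℝ) := by
      simp [Complex.sub_re]
    rw [e1]
    have : (M : ℝ) ≤ (m : ℝ) := hm
    linarith

/-! ### Structure of `ℚ^tr(i)` -/

lemma qtr_mem_qtrI {z : ℂ} (h : TotallyRealNum z) : z ∈ QtrI :=
  Subfield.subset_closure (Or.inl h)

lemma I_mem_qtrI : Complex.I ∈ QtrI :=
  Subfield.subset_closure (Or.inr rfl)

/-- The subfield of `ℂ` consisting of `a + b i` with `a`, `b` totally real. -/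
def trISubfield : Subfield ℂ where
  carrier := {x : ℂ | TotallyRealNum ((x.re : ℝ) : ℂ) ∧ TotallyRealNum ((x.im : ℝ) : ℂ)}
  zero_mem' := by
    constructor <;> simpa using tr_ratCast 0
  one_mem' := by
    constructor <;> simp <;> [skip; skip] <;> first
      | simpa using tr_ratCast 1
      | simpa using tr_ratCast 0
  add_mem' := by
    rintro x y ⟨hx1, hx2⟩ ⟨hy1, hy2⟩
    constructor
    · have := tr_add hx1 hy1
      simpa [Complex.add_re, Complex.ofReal_add] using this
    · have := tr_add hx2 hy2
      simpa [Complex.add_im, Complex.ofReal_add] using this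
  neg_mem' := by
    rintro x ⟨hx1, hx2⟩
    constructor
    · have := tr_neg hx1
      simpa [Complex.neg_re, Complex.ofReal_neg] using this
    · have := tr_neg hx2
      simpa [Complex.neg_im, Complex.ofReal_neg] using this
  mul_mem' := by
    rintro x y ⟨hx1, hx2⟩ ⟨hy1, hy2⟩
    constructor
    · have := tr_sub (tr_mul hx1 hy1) (tr_mul hx2 hy2)
      simpa [Complex.mul_re, Complex.ofReal_sub, Complex.ofReal_mul] using this
    · have := tr_add (tr_mul hx1 hy2) (tr_mul hx2 hy1)
      simpa [Complex.mul_im, Complex.ofReal_add, Complex.ofReal_mul] using this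
  inv_mem' := by
    rintro x ⟨hx1, hx2⟩
    have hnorm : TotallyRealNum (((x.re * x.re + x.im * x.im : ℝ)) : ℂ) := by
      have := tr_add (tr_mul hx1 hx1) (tr_mul hx2 hx2)
      simpa [Complex.ofReal_add, Complex.ofReal_mul] using this
    constructor
    · have := tr_mul hx1 (tr_inv hnorm)
      have er : x⁻¹.re = x.re * (x.re * x.re + x.im * x.im)⁻¹ := by
        rw [Complex.inv_re, Complex.normSq_apply]; ring
      have e : ((x⁻¹.re : ℝ) : ℂ) =
          ((x.re : ℝ) : ℂ) * (((x.re * x.re + x.im * x.im : ℝ) : ℂ))⁻¹ := by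
        rw [er]; push_cast; ring
      rw [e]
      exact this
    · have := tr_mul (tr_neg hx2) (tr_inv hnorm)
      have er : x⁻¹.im = -x.im * (x.re * x.re + x.im * x.im)⁻¹ := by
        rw [Complex.inv_im, Complex.normSq_apply]; ring
      have e : ((x⁻¹.im : ℝ) : ℂ) =
          (-((x.im : ℝ) : ℂ)) * (((x.re * x.re + x.im * x.im : ℝ) : ℂ))⁻¹ := by
        rw [er]; push_cast; ring
      rw [e]
      exact this

lemma qtrI_le_trISubfield : QtrI ≤ trISubfield := by
  rw [QtrI, Subfield.closure_le]
  rintro z (hz | hz)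
  · have him : z.im = 0 := tr_im_eq_zero hz
    have hre : ((z.re : ℝ) : ℂ) = z := Complex.ext (by simp) (by simp [him])
    constructor
    · rw [hre]; exact hz
    · rw [him]; simpa using tr_ratCast 0
  · rw [Set.mem_singleton_iff] at hz
    subst hz
    constructor
    · simpa using tr_ratCast 0
    · simpa using tr_ratCast 1

/-- Key structure: elements of `ℚ^tr(i)` have totally real real and imaginary parts. -/
lemma mem_qtrI_re_im {x : ℂ} (hx : x ∈ QtrI) :
    TotallyRealNum ((x.re : ℝ) : ℂ) ∧ TotallyRealNum ((x.im : ℝ) : ℂ) :=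
  qtrI_le_trISubfield hx

/-- `ℚ^tr(i)` is closed under complex conjugation. -/
lemma conj_mem_qtrI {x : ℂ} (hx : x ∈ QtrI) : (starRingEnd ℂ) x ∈ QtrI := by
  obtain ⟨h1, h2⟩ := mem_qtrI_re_im hx
  have hre : ((x.re : ℝ) : ℂ) ∈ QtrI := qtr_mem_qtrI h1
  have him : ((x.im : ℝ) : ℂ) ∈ QtrI := qtr_mem_qtrI h2
  have heq : (starRingEnd ℂ) x = ((x.re : ℝ) : ℂ) - ((x.im : ℝ) : ℂ) * Complex.I := by
    apply Complex.ext <;> simp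
  rw [heq]
  exact QtrI.sub_mem hre (QtrI.mul_mem him I_mem_qtrI)

lemma conj_mem_ringOfInt {x : ℂ} (hx : x ∈ ringOfInt QtrI) :
    (starRingEnd ℂ) x ∈ ringOfInt QtrI := by
  refine ⟨conj_mem_qtrI hx.1, ?_⟩
  exact hx.2.map ((starRingEnd ℂ) : ℂ →+* ℂ).toIntAlgHom

/-! ### Construction of unit representations -/

set_option synthInstance.maxHeartbeats 100000 in
lemma isIntegral_root_quadratic {d s : ℂ} (hd : IsIntegral ℤ d) (h : s ^ 2 + s = 2 * d) :
    IsIntegral ℤ s := by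
  have h2i : IsIntegral ℤ ((2 : ℂ)) := by
    simpa using isIntegral_algebraMap (R := ℤ) (A := ℂ) (x := (2 : ℤ))
  have h2d : IsIntegral ℤ (2 * d) := h2i.mul hd
  have hmem : s ∈ integralClosure (integralClosure ℤ ℂ) ℂ := by
    show IsIntegral (integralClosure ℤ ℂ) s
    refine ⟨X ^ 2 + X - C (⟨2 * d, h2d⟩ : integralClosure ℤ ℂ), ?_, ?_⟩
    · rw [add_sub_assoc]
      refine (monic_X_pow 2).add_of_left ?_
      refine lt_of_le_of_lt (Polynomial.degree_sub_le _ _) ?_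
      rw [Polynomial.degree_X_pow]
      refine max_lt ?_ ?_
      · rw [Polynomial.degree_X]; norm_num
      · refine lt_of_le_of_lt (Polynomial.degree_C_le) ?_; norm_num
    · have : aeval s ((X : (integralClosure ℤ ℂ)[X]) ^ 2 + X - C (⟨2 * d, h2d⟩ :
          integralClosure ℤ ℂ)) = s ^ 2 + s - 2 * d := by
        simp only [map_sub, map_add, map_pow, aeval_X, aeval_C]
        rfl
      rw [← aeval_def, this, h, sub_self]
  rw [integralClosure_idem] at hmem
  obtain ⟨y, hy⟩ := Algebra.mem_bot.1 hmem
  rw [← hy]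
  exact y.2

lemma two_mem_qtrI : (2 : ℂ) ∈ QtrI := by
  have := QtrI.add_mem QtrI.one_mem QtrI.one_mem
  rwa [one_add_one_eq_two] at this

lemma nat_mem_ringOfInt (m : ℕ) : ((m : ℂ)) ∈ ringOfInt QtrI := by
  constructor
  · exact natCast_mem QtrI m
  · simpa using isIntegral_algebraMap (R := ℤ) (A := ℂ) (x := (m : ℤ))

/-- For every totally nonnegative `d` in the ring of integers of `ℚ^tr(i)`, there is a
pair of units `u, v ≡ 1 mod 2` with `u v = 1` and `u² + v² = 32 d + 2`. -/
lemma exists_unit_pair {d : ℂ} (hmem : d ∈ ringOfInt QtrI) (htnn : TNN d) :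
    ∃ u v alpha beta : ℂ,
      u ∈ ringOfInt QtrI ∧ v ∈ ringOfInt QtrI ∧
      alpha ∈ ringOfInt QtrI ∧ beta ∈ ringOfInt QtrI ∧
      u * v = 1 ∧ u = 1 + 2 * alpha ∧ v = 1 + 2 * beta ∧
      u ^ 2 + v ^ 2 = 32 * d + 2 := by
  obtain ⟨hdQ, hdint⟩ := hmem
  have h2i : IsIntegral ℤ ((2 : ℂ)) := by
    simpa using isIntegral_algebraMap (R := ℤ) (A := ℂ) (x := (2 : ℤ))
  have h8i : IsIntegral ℤ ((8 : ℂ)) := by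
    simpa using isIntegral_algebraMap (R := ℤ) (A := ℂ) (x := (8 : ℤ))
  -- t = sqrt(8d+1)
  have h8 : TNN ((8 : ℚ) * d + ((1 : ℚ) : ℂ)) := tnn_affine htnn (by norm_num) (by norm_num)
  obtain ⟨t, ht2, htr⟩ := tnn_sqrt h8
  have ht2' : t ^ 2 = 8 * d + 1 := by rw [ht2]; push_cast; ring
  have htint : IsIntegral ℤ t := by
    refine IsIntegral.of_pow (n := 2) (by norm_num) ?_
    rw [ht2']
    exact (h8i.mul hdint).add isIntegral_one
  -- s = sqrt(2d)
  have h2 : TNN ((2 : ℚ) * d + ((0 : ℚ) : ℂ)) := tnn_affine htnn (by norm_num) (by norm_num)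
  obtain ⟨s, hs2, hstr⟩ := tnn_sqrt h2
  have hs2' : s ^ 2 = 2 * d := by rw [hs2]; push_cast; ring
  have hsint : IsIntegral ℤ s := by
    refine IsIntegral.of_pow (n := 2) (by norm_num) ?_
    rw [hs2']
    exact h2i.mul hdint
  -- sp = (t-1)/2
  have hspq : ((t - 1) / 2) ^ 2 + ((t - 1) / 2) = 2 * d := by
    linear_combination ht2' / 4
  have hspint : IsIntegral ℤ ((t - 1) / 2) := isIntegral_root_quadratic hdint hspq
  have htQ : t ∈ QtrI := qtr_mem_qtrI htr
  have hsQ : s ∈ QtrI := qtr_mem_qtrI hstr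
  have hspQ : ((t - 1) / 2) ∈ QtrI :=
    QtrI.div_mem (QtrI.sub_mem htQ QtrI.one_mem) two_mem_qtrI
  have htR : t ∈ ringOfInt QtrI := ⟨htQ, htint⟩
  have hsR : s ∈ ringOfInt QtrI := ⟨hsQ, hsint⟩
  have hspR : ((t - 1) / 2) ∈ ringOfInt QtrI := ⟨hspQ, hspint⟩
  refine ⟨t + 2 * s, t - 2 * s, (t - 1) / 2 + s, (t - 1) / 2 - s, ?_, ?_, ?_, ?_, ?_, ?_, ?_, ?_⟩
  · exact (ringOfInt QtrI).add_mem htR ((ringOfInt QtrI).mul_mem ⟨two_mem_qtrI, h2i⟩ hsR)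
  · exact (ringOfInt QtrI).sub_mem htR ((ringOfInt QtrI).mul_mem ⟨two_mem_qtrI, h2i⟩ hsR)
  · exact (ringOfInt QtrI).add_mem hspR hsR
  · exact (ringOfInt QtrI).sub_mem hspR hsR
  · linear_combination ht2' - 4 * hs2'
  · ring
  · ring
  · linear_combination 2 * ht2' + 8 * hs2'

/-- Completeness: every totally real integer satisfies the unit equations. -/
lemma tr_imp_exists {x : ℂ} (hx : x ∈ ringOfInt QtrI) (h : TotallyRealNum x) :
    ∃ u v p q a1 a2 a3 a4 : ℂ,
      u ∈ ringOfInt QtrI ∧ v ∈ ringOfInt QtrI ∧ p ∈ ringOfInt QtrI ∧ q ∈ ringOfInt QtrI ∧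
      a1 ∈ ringOfInt QtrI ∧ a2 ∈ ringOfInt QtrI ∧ a3 ∈ ringOfInt QtrI ∧ a4 ∈ ringOfInt QtrI ∧
      u * v = 1 ∧ p * q = 1 ∧
      u = 1 + 2 * a1 ∧ v = 1 + 2 * a2 ∧ p = 1 + 2 * a3 ∧ q = 1 + 2 * a4 ∧
      32 * x = u ^ 2 + v ^ 2 - p ^ 2 - q ^ 2 := by
  obtain ⟨m, hm⟩ := exists_nat_tnn_add h
  have hd1 : (x + (m : ℂ)) ∈ ringOfInt QtrI :=
    (ringOfInt QtrI).add_mem hx (nat_mem_ringOfInt m)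
  obtain ⟨u, v, a1, a2, hu, hv, ha1, ha2, huv, hu1, hv1, husq⟩ := exists_unit_pair hd1 hm
  obtain ⟨p, q, a3, a4, hp, hq, ha3, ha4, hpq, hp1, hq1, hpsq⟩ :=
    exists_unit_pair (nat_mem_ringOfInt m) (tnn_natCast m)
  exact ⟨u, v, p, q, a1, a2, a3, a4, hu, hv, hp, hq, ha1, ha2, ha3, ha4, huv, hpq,
    hu1, hv1, hp1, hq1, by linear_combination hpsq - husq⟩

/-! ### Soundness: squares of units `≡ 1 mod 2` are totally real -/

set_option maxHeartbeats 800000 in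
/-- A root of unity in a number field that is `≡ 1 mod 2` (over the integers of `ℂ`)
must be `±1`: norm pinching argument. -/
lemma zeta_eq_pm_one {K : IntermediateField ℚ ℂ} [FiniteDimensional ℚ K]
    (ζK : K) {n : ℕ} (hn : 0 < n) (hζn : ζK ^ n = 1)
    {γ : ℂ} (hγint : IsIntegral ℤ γ) (hγ : (ζK : ℂ) = 1 + 2 * γ) :
    (ζK : ℂ) = 1 ∨ (ζK : ℂ) = -1 := by
  classical
  by_cases h1 : (ζK : ℂ) = 1
  · exact Or.inl h1
  right
  have hζK1 : ζK ≠ 1 := fun h => h1 (by rw [h]; rfl)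
  set γK : K := (ζK - 1) / 2 with hγKdef
  have hval : (γK : ℂ) = γ := by
    have h2 : (γK : ℂ) = algebraMap K ℂ ((ζK - 1) / 2) := rfl
    rw [h2, map_div₀, map_sub, map_one, map_ofNat]
    have h3 : algebraMap K ℂ ζK = (ζK : ℂ) := rfl
    rw [h3, hγ]
    ring
  have hγK0 : γK ≠ 0 := by
    intro h
    rw [hγKdef] at h
    rcases div_eq_zero_iff.1 h with h' | h'
    · exact hζK1 (by linear_combination h')
    · exact two_ne_zero h'
  have hγKint : IsIntegral ℤ γK := by
    refine (isIntegral_algebraMap_iff (algebraMap K ℂ).injective).1 ?_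
    show IsIntegral ℤ ((γK : ℂ))
    rw [hval]
    exact hγint
  set N : ℚ := Algebra.norm ℚ γK with hNdef
  have hNint : IsIntegral ℤ N := Algebra.isIntegral_norm (K := ℚ) (L := K) hγKint
  obtain ⟨M, hM⟩ := IsIntegrallyClosed.isIntegral_iff.1 hNint
  have hN0 : N ≠ 0 := by
    rw [hNdef, Algebra.norm_ne_zero_iff]
    exact hγK0
  have hM0 : M ≠ 0 := by
    intro h
    apply hN0
    rw [← hM, h]
    simp
  have hbound : ∀ σ : K →ₐ[ℚ] ℂ, ‖σ γK‖ ≤ 1 := by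
    intro σ
    have hζσ : (σ ζK) ^ n = 1 := by
      rw [← map_pow, hζn, map_one]
    have hζσn : ‖σ ζK‖ = 1 := Complex.norm_eq_one_of_pow_eq_one hζσ hn.ne'
    have hγσ : σ γK = (σ ζK - 1) / 2 := by
      rw [hγKdef, map_div₀, map_sub, map_one, map_ofNat]
    rw [hγσ, norm_div]
    have h2 : ‖(2 : ℂ)‖ = 2 := by norm_num
    rw [h2]
    have : ‖σ ζK - 1‖ ≤ 2 := by
      calc ‖σ ζK - 1‖ ≤ ‖σ ζK‖ + ‖(1 : ℂ)‖ := norm_sub_le _ _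
        _ = 2 := by rw [hζσn]; norm_num
    linarith
  have hprod : ‖algebraMap ℚ ℂ N‖ = ∏ σ : K →ₐ[ℚ] ℂ, ‖σ γK‖ := by
    rw [hNdef, Algebra.norm_eq_prod_embeddings, norm_prod]
  have hNval : (1 : ℝ) ≤ ‖algebraMap ℚ ℂ N‖ := by
    rw [← hM]
    have hcast : algebraMap ℚ ℂ (algebraMap ℤ ℚ M) = (M : ℂ) := by
      rw [eq_ratCast, eq_intCast]
      norm_cast
    rw [hcast, Complex.norm_intCast]
    exact_mod_cast Int.one_le_abs hM0
  have hval_emb : (1 : ℝ) ≤ ‖K.val γK‖ := by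
    have hmem : (K.val : K →ₐ[ℚ] ℂ) ∈ (Finset.univ : Finset (K →ₐ[ℚ] ℂ)) := Finset.mem_univ _
    have hsplit : ‖K.val γK‖ * ∏ σ ∈ Finset.univ.erase (K.val : K →ₐ[ℚ] ℂ), ‖σ γK‖ =
        ∏ σ : K →ₐ[ℚ] ℂ, ‖σ γK‖ :=
      Finset.mul_prod_erase Finset.univ (fun σ : K →ₐ[ℚ] ℂ => ‖σ γK‖) hmem
    have hrest : ∏ σ ∈ Finset.univ.erase (K.val : K →ₐ[ℚ] ℂ), ‖σ γK‖ ≤ 1 :=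
      Finset.prod_le_one (fun i _ => norm_nonneg _) (fun i _ => hbound i)
    have h1le : (1 : ℝ) ≤ ‖K.val γK‖ * ∏ σ ∈ Finset.univ.erase (K.val : K →ₐ[ℚ] ℂ), ‖σ γK‖ := by
      rw [hsplit, ← hprod]
      exact hNval
    calc (1 : ℝ) ≤ ‖K.val γK‖ * ∏ σ ∈ Finset.univ.erase (K.val : K →ₐ[ℚ] ℂ), ‖σ γK‖ := h1le
      _ ≤ ‖K.val γK‖ * 1 := mul_le_mul_of_nonneg_left hrest (norm_nonneg _)
      _ = ‖K.val γK‖ := mul_one _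
  have hvγ : K.val γK = (γK : ℂ) := rfl
  rw [hvγ, hval] at hval_emb
  have hζabs : ‖(ζK : ℂ)‖ = 1 := by
    have hpow : (ζK : ℂ) ^ n = 1 := by
      have h5 := congrArg (fun w : K => (w : ℂ)) hζn
      push_cast at h5
      exact h5
    exact Complex.norm_eq_one_of_pow_eq_one hpow hn.ne'
  have hdist : (2 : ℝ) ≤ ‖(ζK : ℂ) - 1‖ := by
    have h6 : (ζK : ℂ) - 1 = 2 * γ := by rw [hγ]; ring
    rw [h6, norm_mul]
    have h2 : ‖(2 : ℂ)‖ = 2 := by norm_num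
    rw [h2]
    linarith
  have hnormSq : (ζK : ℂ).re ^ 2 + (ζK : ℂ).im ^ 2 = 1 := by
    have h7 : Complex.normSq ((ζK : ℂ)) = 1 := by
      rw [← Complex.sq_norm, hζabs]
      norm_num
    rw [Complex.normSq_apply] at h7
    nlinarith [h7]
  have hd2 : (4 : ℝ) ≤ ((ζK : ℂ).re - 1) ^ 2 + (ζK : ℂ).im ^ 2 := by
    have h8 : Complex.normSq ((ζK : ℂ) - 1) = ‖(ζK : ℂ) - 1‖ ^ 2 := by
      rw [← Complex.sq_norm]
    have h9 : Complex.normSq ((ζK : ℂ) - 1) = ((ζK : ℂ).re - 1) ^ 2 + (ζK : ℂ).im ^ 2 := by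
      rw [Complex.normSq_apply]
      simp only [Complex.sub_re, Complex.sub_im, Complex.one_re, Complex.one_im]
      ring
    nlinarith [hdist, norm_nonneg ((ζK : ℂ) - 1), h8, h9]
  have hre : (ζK : ℂ).re = -1 := by nlinarith
  have him : (ζK : ℂ).im = 0 := by nlinarith
  apply Complex.ext
  · simpa using hre
  · simpa using him

lemma isIntegral_I_Q : IsIntegral ℚ Complex.I := by
  refine ⟨X ^ 2 + 1, ?_, ?_⟩
  · refine (monic_X_pow 2).add_of_left ?_
    refine lt_of_le_of_lt (Polynomial.degree_one_le) ?_
    rw [Polynomial.degree_X_pow]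
    norm_num
  · simp [Complex.I_sq]

set_option maxHeartbeats 1600000 in
set_option synthInstance.maxHeartbeats 200000 in
/-- The square of a unit `≡ 1 mod 2` in the ring of integers of `ℚ^tr(i)` is totally real. -/
lemma unit_sq_tr {u v alpha beta : ℂ}
    (hu : u ∈ ringOfInt QtrI) (hv : v ∈ ringOfInt QtrI)
    (hα : alpha ∈ ringOfInt QtrI) (hβ : beta ∈ ringOfInt QtrI)
    (huv : u * v = 1) (hu1 : u = 1 + 2 * alpha) (hv1 : v = 1 + 2 * beta) :
    TotallyRealNum (u ^ 2) := by
  classical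
  have hu0 : u ≠ 0 := by
    intro h
    rw [h, zero_mul] at huv
    exact zero_ne_one huv
  obtain ⟨hra, hrb⟩ := mem_qtrI_re_im hu.1
  set a : ℂ := ((u.re : ℝ) : ℂ) with hadef
  set b : ℂ := ((u.im : ℝ) : ℂ) with hbdef
  have hu_eq : u = a + b * Complex.I := by
    rw [hadef, hbdef, Complex.re_add_im]
  have hcu : (starRingEnd ℂ) u = a - b * Complex.I := by
    apply Complex.ext <;> simp [hadef, hbdef]
  have hcu0 : (starRingEnd ℂ) u ≠ 0 := by
    simpa using hu0
  have hcv : (starRingEnd ℂ) u * (starRingEnd ℂ) v = 1 := by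
    rw [← map_mul, huv, map_one]
  -- ζ = u / conj u  (= u * conj v)
  set ζ : ℂ := u * (starRingEnd ℂ) v with hζdef
  have hζint : IsIntegral ℤ ζ := hu.2.mul (conj_mem_ringOfInt hv).2
  have hζconj : ζ * (starRingEnd ℂ) u = u := by
    rw [hζdef]
    calc u * (starRingEnd ℂ) v * (starRingEnd ℂ) u
        = u * ((starRingEnd ℂ) u * (starRingEnd ℂ) v) := by ring
      _ = u := by rw [hcv, mul_one]
  have hζeq : ζ = u * ((starRingEnd ℂ) u)⁻¹ := by
    field_simp [hcu0]
    linear_combination hζconj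
  -- ζ ≡ 1 mod 2
  set γ : ℂ := alpha + (starRingEnd ℂ) beta + 2 * (alpha * (starRingEnd ℂ) beta) with hγdef
  have h2i : IsIntegral ℤ ((2 : ℂ)) := by
    simpa using isIntegral_algebraMap (R := ℤ) (A := ℂ) (x := (2 : ℤ))
  have hγint : IsIntegral ℤ γ :=
    (hα.2.add (conj_mem_ringOfInt hβ).2).add
      (h2i.mul (hα.2.mul (conj_mem_ringOfInt hβ).2))
  have hcvβ : (starRingEnd ℂ) v = 1 + 2 * (starRingEnd ℂ) beta := by
    rw [hv1]
    simp [map_add, map_mul, map_one, map_ofNat]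
  have hζγ : ζ = 1 + 2 * γ := by
    rw [hζdef, hu1, hcvβ, hγdef]
    ring
  -- the number field K = ℚ(a, b, i)
  set S : Set ℂ := {a, b, Complex.I} with hSdef
  set K : IntermediateField ℚ ℂ := IntermediateField.adjoin ℚ S with hKdef
  haveI : Finite S := by
    rw [hSdef]
    exact (((Set.finite_singleton Complex.I).insert b).insert a).to_subtype
  have hSint : ∀ x ∈ S, IsIntegral ℚ x := by
    intro x hx
    rcases hx with rfl | hx
    · exact tr_isIntegralQ hra
    · rcases hx with rfl | hx
      · exact tr_isIntegralQ hrb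
      · rw [Set.mem_singleton_iff] at hx
        subst hx
        exact isIntegral_I_Q
  haveI : FiniteDimensional ℚ K := IntermediateField.finiteDimensional_adjoin hSint
  haveI : CharZero K := charZero_of_injective_algebraMap (algebraMap ℚ K).injective
  haveI : NumberField K := ⟨⟩
  have haK : a ∈ K := IntermediateField.subset_adjoin ℚ _ (by rw [hSdef]; simp)
  have hbK : b ∈ K := IntermediateField.subset_adjoin ℚ _ (by rw [hSdef]; simp)
  have hIK : Complex.I ∈ K := IntermediateField.subset_adjoin ℚ _ (by rw [hSdef]; simp)
  have huK : u ∈ K := by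
    rw [hu_eq]
    exact add_mem haK (mul_mem hbK hIK)
  have hcuK : (starRingEnd ℂ) u ∈ K := by
    rw [hcu]
    exact sub_mem haK (mul_mem hbK hIK)
  have hζK : ζ ∈ K := by
    rw [hζeq]
    exact mul_mem huK (inv_mem hcuK)
  set ζK : K := ⟨ζ, hζK⟩ with hζKdef
  have hζKint : IsIntegral ℤ ζK := by
    refine (isIntegral_algebraMap_iff (algebraMap K ℂ).injective).1 ?_
    exact hζint
  -- all conjugates of ζ have absolute value 1
  have hnorm1 : ∀ φ : K →+* ℂ, ‖φ ζK‖ = 1 := by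
    intro φ
    have hima : (φ ⟨a, haK⟩).im = 0 := hra.2 _ (aeval_ringHom_minpoly φ haK)
    have himb : (φ ⟨b, hbK⟩).im = 0 := hrb.2 _ (aeval_ringHom_minpoly φ hbK)
    have hI2 : (φ ⟨Complex.I, hIK⟩) ^ 2 = -1 := by
      have e1 : ((⟨Complex.I, hIK⟩ : K) ^ 2) = -1 := by
        apply Subtype.ext
        push_cast
        exact Complex.I_sq
      rw [← map_pow, e1, map_neg, map_one]
    have hwcase : (starRingEnd ℂ) (φ ⟨Complex.I, hIK⟩) = -(φ ⟨Complex.I, hIK⟩) := by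
      have hfac : (φ ⟨Complex.I, hIK⟩ - Complex.I) * (φ ⟨Complex.I, hIK⟩ + Complex.I) = 0 := by
        linear_combination hI2 - Complex.I_sq
      rcases mul_eq_zero.1 hfac with h | h
      · have : φ ⟨Complex.I, hIK⟩ = Complex.I := by linear_combination h
        rw [this, Complex.conj_I]
      · have : φ ⟨Complex.I, hIK⟩ = -Complex.I := by linear_combination h
        rw [this]
        simp
    have hdecu : (⟨u, huK⟩ : K) = ⟨a, haK⟩ + ⟨b, hbK⟩ * ⟨Complex.I, hIK⟩ :=
      Subtype.ext hu_eq
    have hdeccu : (⟨(starRingEnd ℂ) u, hcuK⟩ : K) = ⟨a, haK⟩ - ⟨b, hbK⟩ * ⟨Complex.I, hIK⟩ :=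
      Subtype.ext hcu
    have hφu : φ ⟨u, huK⟩ = φ ⟨a, haK⟩ + φ ⟨b, hbK⟩ * φ ⟨Complex.I, hIK⟩ := by
      rw [hdecu, map_add, map_mul]
    have hφcu : φ ⟨(starRingEnd ℂ) u, hcuK⟩ =
        φ ⟨a, haK⟩ - φ ⟨b, hbK⟩ * φ ⟨Complex.I, hIK⟩ := by
      rw [hdeccu, map_sub, map_mul]
    have hconj_φu : (starRingEnd ℂ) (φ ⟨u, huK⟩) = φ ⟨(starRingEnd ℂ) u, hcuK⟩ := by
      rw [hφu, hφcu, map_add, map_mul]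
      have e1 : (starRingEnd ℂ) (φ ⟨a, haK⟩) = φ ⟨a, haK⟩ :=
        Complex.conj_eq_iff_im.2 hima
      have e2 : (starRingEnd ℂ) (φ ⟨b, hbK⟩) = φ ⟨b, hbK⟩ :=
        Complex.conj_eq_iff_im.2 himb
      rw [e1, e2, hwcase]
      ring
    have hφu0 : φ ⟨u, huK⟩ ≠ 0 := by
      intro h
      have : (⟨u, huK⟩ : K) = 0 := φ.injective (by rw [h, map_zero])
      exact hu0 (by simpa using congrArg Subtype.val this)
    have hdecζ : ζK = ⟨u, huK⟩ * (⟨(starRingEnd ℂ) u, hcuK⟩)⁻¹ := by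
      apply Subtype.ext
      push_cast
      exact hζeq
    rw [hdecζ, map_mul, map_inv₀, norm_mul, norm_inv]
    rw [← hconj_φu]
    have : ‖(starRingEnd ℂ) (φ ⟨u, huK⟩)‖ = ‖φ ⟨u, huK⟩‖ := by
      rw [Complex.norm_conj]
    rw [this]
    rw [mul_inv_cancel₀ (by simpa using hφu0)]
  obtain ⟨n, hn, hζn⟩ := NumberField.Embeddings.pow_eq_one_of_norm_eq_one K ℂ hζKint hnorm1
  have hζval : (ζK : ℂ) = ζ := rfl
  rcases zeta_eq_pm_one ζK hn hζn hγint (by rw [hζval]; exact hζγ) with hone | hmone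
  · -- ζ = 1 : u is real, hence totally real
    rw [hζval] at hone
    have hcueq : (starRingEnd ℂ) u = u := by
      have h := hζconj
      rw [hone, one_mul] at h
      exact h
    have him : u.im = 0 := Complex.conj_eq_iff_im.1 hcueq
    have hua : u = a := by
      apply Complex.ext
      · simp [hadef]
      · simp [hadef, him]
    have htr : TotallyRealNum u := by rw [hua]; exact hra
    rw [pow_two]
    exact tr_mul htr htr
  · -- ζ = -1 : u is purely imaginary, u² = -(b·b)
    rw [hζval] at hmone
    have hcueq : (starRingEnd ℂ) u = -u := by
      have : (-1 : ℂ) * (starRingEnd ℂ) u = u := by rw [← hmone]; exact hζconj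
      linear_combination -this
    have hre : u.re = 0 := by
      have h5 := congrArg Complex.re hcueq
      simp only [Complex.conj_re, Complex.neg_re] at h5
      linarith
    have hub : u = b * Complex.I := by
      apply Complex.ext
      · simp [hbdef, hre]
      · simp [hbdef]
    have husq : u ^ 2 = -(b * b) := by
      rw [hub, mul_pow, Complex.I_sq]
      ring
    rw [husq]
    exact tr_neg (tr_mul hrb hrb)

/-- Soundness: the existential equations force totally realness. -/
lemma sound_of_equations {x u v p q a1 a2 a3 a4 : ℂ}
    (hu : u ∈ ringOfInt QtrI) (hv : v ∈ ringOfInt QtrI)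
    (hp : p ∈ ringOfInt QtrI) (hq : q ∈ ringOfInt QtrI)
    (ha1 : a1 ∈ ringOfInt QtrI) (ha2 : a2 ∈ ringOfInt QtrI)
    (ha3 : a3 ∈ ringOfInt QtrI) (ha4 : a4 ∈ ringOfInt QtrI)
    (huv : u * v = 1) (hpq : p * q = 1)
    (hu1 : u = 1 + 2 * a1) (hv1 : v = 1 + 2 * a2)
    (hp1 : p = 1 + 2 * a3) (hq1 : q = 1 + 2 * a4)
    (heq : 32 * x = u ^ 2 + v ^ 2 - p ^ 2 - q ^ 2) :
    TotallyRealNum x := by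
  have h1 := unit_sq_tr hu hv ha1 ha2 huv hu1 hv1
  have h2 := unit_sq_tr hv hu ha2 ha1 (by rw [mul_comm]; exact huv) hv1 hu1
  have h3 := unit_sq_tr hp hq ha3 ha4 hpq hp1 hq1
  have h4 := unit_sq_tr hq hp ha4 ha3 (by rw [mul_comm]; exact hpq) hq1 hp1
  have h32 : TotallyRealNum (32 * x) := by
    rw [heq]
    exact tr_sub (tr_sub (tr_add h1 h2) h3) h4
  have hxeq : x = ((1 / 32 : ℚ) : ℂ) * (32 * x) := by
    push_cast
    ring
  rw [hxeq]
  exact tr_mul (tr_ratCast _) h32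

end ZtrAux

open FirstOrder

namespace ZtrAux

open Language

/-- Term for the distinguished variable `x`. -/
def xT : Language.ring.Term (Fin 9) := Term.var 0

/-- Terms for the existential variables. -/
def yT (i : Fin 8) : Language.ring.Term (Fin 9) := Term.var i.succ

/-- The term `2`. -/
def twoT : Language.ring.Term (Fin 9) := 1 + 1

/-- The term `32`. -/
def t32 : Language.ring.Term (Fin 9) := twoT * twoT * twoT * twoT * twoT

/-- The quantifier-free formula defining `ℤ^tr`:
`u v = 1 ∧ p q = 1 ∧ u = 1 + 2a₁ ∧ v = 1 + 2a₂ ∧ p = 1 + 2a₃ ∧ q = 1 + 2a₄ ∧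
32 x = u² + v² - p² - q²`. -/
def theta : Language.ring.Formula (Fin 9) :=
  (Term.equal (yT 0 * yT 1) 1) ⊓ (Term.equal (yT 2 * yT 3) 1) ⊓
  (Term.equal (yT 0) (1 + twoT * yT 4)) ⊓ (Term.equal (yT 1) (1 + twoT * yT 5)) ⊓
  (Term.equal (yT 2) (1 + twoT * yT 6)) ⊓ (Term.equal (yT 3) (1 + twoT * yT 7)) ⊓
  (Term.equal (t32 * xT) (yT 0 * yT 0 + yT 1 * yT 1 + (-(yT 2 * yT 2)) + (-(yT 3 * yT 3))))

lemma theta_isQF : theta.IsQF := by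
  unfold theta
  repeat' apply BoundedFormula.IsQF.inf
  all_goals exact (BoundedFormula.IsAtomic.equal _ _).isQF

lemma realize_theta_iff (x : ringOfInt QtrI) (y : Fin 8 → ringOfInt QtrI) :
    (letI := Ring.compatibleRingOfRing (ringOfInt QtrI)
     theta.Realize (Fin.cons x y)) ↔
    (y 0 * y 1 = 1 ∧ y 2 * y 3 = 1 ∧
     y 0 = 1 + (1 + 1) * y 4 ∧ y 1 = 1 + (1 + 1) * y 5 ∧
     y 2 = 1 + (1 + 1) * y 6 ∧ y 3 = 1 + (1 + 1) * y 7 ∧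
     (1 + 1) * (1 + 1) * (1 + 1) * (1 + 1) * (1 + 1) * x =
       y 0 * y 0 + y 1 * y 1 + (-(y 2 * y 2)) + (-(y 3 * y 3))) := by
  letI := Ring.compatibleRingOfRing (ringOfInt QtrI)
  simp only [theta, xT, yT, twoT, t32, Formula.realize_inf, Formula.realize_equal,
    Ring.realize_add, Ring.realize_mul, Ring.realize_neg, Ring.realize_one,
    Term.realize_var, Fin.cons_zero, Fin.cons_succ]
  tauto

end ZtrAux

/-- `ℤ^tr` is existentially definable in the ring of integers of `ℚ^tr(i)`: there are `n : ℕ`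
and a quantifier-free formula `θ(x, y₁, …, y_n)` in the language of rings such that for every
`x` in `O_{ℚ^tr(i)}`, `x ∈ ℤ^tr` iff `∃ y₁ … y_n, θ(x, y₁, …, y_n)` holds in `O_{ℚ^tr(i)}`. -/
theorem Ztr_existentially_definable :
    ∃ (n : ℕ) (θ : Language.ring.Formula (Fin (n + 1))),
      θ.IsQF ∧
      ∀ x : ringOfInt QtrI,
        TotallyRealNum (x : ℂ) ↔
          ∃ y : Fin n → ringOfInt QtrI,
            (letI := Ring.compatibleRingOfRing (ringOfInt QtrI)
             θ.Realize (Fin.cons x y)) := by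
  refine ⟨8, ZtrAux.theta, ZtrAux.theta_isQF, fun x => ?_⟩
  constructor
  · intro hTR
    obtain ⟨u, v, p, q, a1, a2, a3, a4, hu, hv, hp, hq, ha1, ha2, ha3, ha4, huv, hpq,
      hu1, hv1, hp1, hq1, heq⟩ := ZtrAux.tr_imp_exists x.2 hTR
    set Y : Fin 8 → ringOfInt QtrI :=
      ![⟨u, hu⟩, ⟨v, hv⟩, ⟨p, hp⟩, ⟨q, hq⟩, ⟨a1, ha1⟩, ⟨a2, ha2⟩, ⟨a3, ha3⟩, ⟨a4, ha4⟩] with hYdef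
    have hY0 : ((Y 0 : ℂ)) = u := rfl
    have hY1 : ((Y 1 : ℂ)) = v := rfl
    have hY2 : ((Y 2 : ℂ)) = p := rfl
    have hY3 : ((Y 3 : ℂ)) = q := rfl
    have hY4 : ((Y 4 : ℂ)) = a1 := rfl
    have hY5 : ((Y 5 : ℂ)) = a2 := rfl
    have hY6 : ((Y 6 : ℂ)) = a3 := rfl
    have hY7 : ((Y 7 : ℂ)) = a4 := rfl
    refine ⟨Y, ?_⟩
    rw [ZtrAux.realize_theta_iff]
    refine ⟨?_, ?_, ?_, ?_, ?_, ?_, ?_⟩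
    · apply Subtype.ext; push_cast; rw [hY0, hY1]; exact huv
    · apply Subtype.ext; push_cast; rw [hY2, hY3]; exact hpq
    · apply Subtype.ext; push_cast; rw [hY0, hY4]; linear_combination hu1
    · apply Subtype.ext; push_cast; rw [hY1, hY5]; linear_combination hv1
    · apply Subtype.ext; push_cast; rw [hY2, hY6]; linear_combination hp1
    · apply Subtype.ext; push_cast; rw [hY3, hY7]; linear_combination hq1
    · apply Subtype.ext; push_cast; rw [hY0, hY1, hY2, hY3]; linear_combination heq
  · rintro ⟨y, hy⟩
    rw [ZtrAux.realize_theta_iff] at hy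
    obtain ⟨e1, e2, e3, e4, e5, e6, e7⟩ := hy
    have c1 : ((y 0 : ℂ)) * ((y 1 : ℂ)) = 1 := by exact_mod_cast congrArg Subtype.val e1
    have c2 : ((y 2 : ℂ)) * ((y 3 : ℂ)) = 1 := by exact_mod_cast congrArg Subtype.val e2
    have c3 : ((y 0 : ℂ)) = 1 + 2 * (y 4 : ℂ) := by
      have := congrArg Subtype.val e3
      push_cast at this
      linear_combination this
    have c4 : ((y 1 : ℂ)) = 1 + 2 * (y 5 : ℂ) := by
      have := congrArg Subtype.val e4
      push_cast at this
      linear_combination this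
    have c5 : ((y 2 : ℂ)) = 1 + 2 * (y 6 : ℂ) := by
      have := congrArg Subtype.val e5
      push_cast at this
      linear_combination this
    have c6 : ((y 3 : ℂ)) = 1 + 2 * (y 7 : ℂ) := by
      have := congrArg Subtype.val e6
      push_cast at this
      linear_combination this
    have c7 : 32 * (x : ℂ) =
        (y 0 : ℂ) ^ 2 + (y 1 : ℂ) ^ 2 - (y 2 : ℂ) ^ 2 - (y 3 : ℂ) ^ 2 := by
      have := congrArg Subtype.val e7
      push_cast at this
      linear_combination this
    exact ZtrAux.sound_of_equations (y 0).2 (y 1).2 (y 2).2 (y 3).2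
      (y 4).2 (y 5).2 (y 6).2 (y 7).2 c1 c2 c3 c4 c5 c6 c7

end
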